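/- (Appell property, scalar consequence) Let n ≥ 1 and k ≥ 1. Then ∂_{x_0} P_k^n(x) = k P_{k-1}^n(x) for every paravector x, where ∂_{x_0} denotes the partial derivative with respect to the real coordinate x_0. Equivalently, the coefficients satisfy (k-s) T_s^k(n) + (s+1) T_{s+1}^k(n) = k T_s^{k-1}(n) for 0 ≤ s ≤ k-1. -/

import Mathlib

/-! The variables `x = x₀ + x̲` and `x̄ = x₀ - x̲` both have `x₀`-derivative `1`, so the product rule
sends `x^(k-s) x̄^s` to `(k-s) x^(k-s-1) x̄^s + s x^(k-s) x̄^(s-1)`, and collecting terms the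
derivative of `P_k^n` has coefficients `(k-s) T_s^k + (s+1) T_(s+1)^k`. These equal `k T_s^(k-1)`:
both binomial factors become `k C(k-1,s)`, each Pochhammer symbol in the numerator loses one
factor, and the two lost factors `(n+1)/2 + k-1-s` and `(n-1)/2 + s` add up to `n + k - 1`, the
factor that `(n)_k` has over `(n)_(k-1)`. -/

/-- The coefficients `T_s^k(n) = C(k,s) ((n+1)/2)_{k-s} ((n-1)/2)_s / (n)_k`. -/
noncomputable def T (n k s : ℕ) : ℝ :=
  (k.choose s : ℝ) * ((ascPochhammer ℝ (k - s)).eval (((n : ℝ) + 1) / 2)) *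
    ((ascPochhammer ℝ s).eval (((n : ℝ) - 1) / 2)) / ((ascPochhammer ℝ k).eval (n : ℝ))

open Finset

theorem choose_mul_ascPochhammer_recurrence {R : Type*} [CommRing R] (α β : R) {m s : ℕ}
    (hs : s ≤ m) :
    ((m : R) + 1 - s) * ((m + 1).choose s * (ascPochhammer R (m + 1 - s)).eval α *
        (ascPochhammer R s).eval β)
      + ((s : R) + 1) * ((m + 1).choose (s + 1) * (ascPochhammer R (m - s)).eval α *
        (ascPochhammer R (s + 1)).eval β)
      = ((m : R) + 1) * (α + β + m) *
        (m.choose s * (ascPochhammer R (m - s)).eval α * (ascPochhammer R s).eval β) := by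
  have hleft : ((m : R) + 1 - s) * (m + 1).choose s = ((m : R) + 1) * m.choose s := by
    have := congrArg (Nat.cast : ℕ → R) (Nat.choose_mul_succ_eq m s)
    push_cast [Nat.cast_sub (Nat.le_succ_of_le hs)] at this
    linear_combination -this
  have hright : ((s : R) + 1) * (m + 1).choose (s + 1) = ((m : R) + 1) * m.choose s := by
    have := congrArg (Nat.cast : ℕ → R) (Nat.add_one_mul_choose_eq m s)
    push_cast at this
    linear_combination -this
  rw [Nat.succ_sub hs, ascPochhammer_succ_eval, ascPochhammer_succ_eval, Nat.cast_sub hs]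
  linear_combination ((ascPochhammer R (m - s)).eval α * (ascPochhammer R s).eval β) *
    ((α + (m - s)) * hleft + (β + s) * hright)

theorem T_recurrence {n : ℕ} (hn : 1 ≤ n) {m s : ℕ} (hs : s ≤ m) :
    ((m : ℝ) + 1 - s) * T n (m + 1) s + ((s : ℝ) + 1) * T n (m + 1) (s + 1)
      = ((m : ℝ) + 1) * T n m s := by
  have hPm : (ascPochhammer ℝ m).eval (n : ℝ) ≠ 0 :=
    (ascPochhammer_pos m _ (by exact_mod_cast hn)).ne'
  have hnm : (n : ℝ) + m ≠ 0 := by positivity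
  have key := choose_mul_ascPochhammer_recurrence (((n : ℝ) + 1) / 2) (((n : ℝ) - 1) / 2) hs
  unfold T
  rw [ascPochhammer_succ_eval, Nat.add_sub_add_right]
  field_simp
  linear_combination key

section HomogeneousSum

variable {A : Type*}

def homogeneousSum [Ring A] [Module ℝ A] (c : ℕ → ℝ) (k : ℕ) (a b : A) : A :=
  ∑ s ∈ range (k + 1), c s • (a ^ (k - s) * b ^ s)

theorem sum_smul_pow_mul_pow_deriv_eq_homogeneousSum [Ring A] [Algebra ℝ A] (c : ℕ → ℝ) (k : ℕ)
    (a b : A) :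
    ∑ s ∈ range (k + 2), c s • (((k + 1 - s : ℕ) : ℝ) • a ^ (k - s) * b ^ s
        + a ^ (k + 1 - s) * ((s : ℝ) • b ^ (s - 1)))
      = homogeneousSum (fun s => ((k : ℝ) + 1 - s) * c s + ((s : ℝ) + 1) * c (s + 1)) k a b := by
  simp only [smul_add, smul_mul_assoc, mul_smul_comm, smul_smul, sum_add_distrib]
  rw [sum_range_succ, sum_range_succ' (fun s => (c s * s) • (a ^ (k + 1 - s) * b ^ (s - 1)))]
  simp only [Nat.sub_self, Nat.cast_zero, mul_zero, zero_smul, add_zero, homogeneousSum,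
    ← sum_add_distrib, add_smul]
  refine sum_congr rfl fun s hs => ?_
  have hs : s ≤ k := Nat.lt_succ_iff.mp (mem_range.mp hs)
  rw [Nat.succ_sub hs, Nat.add_sub_cancel, Nat.add_sub_add_right, Nat.cast_succ, Nat.cast_sub hs,
    Nat.cast_succ]
  ring_nf

variable [NormedRing A] [NormedAlgebra ℝ A]

theorem hasDerivAt_algebraMap_add_pow (u : A) (p : ℕ) (x₀ : ℝ) :
    HasDerivAt (fun t : ℝ => (algebraMap ℝ A t + u) ^ p)
      ((p : ℝ) • (algebraMap ℝ A x₀ + u) ^ (p - 1)) x₀ := by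
  have h : HasDerivAt (fun t : ℝ => algebraMap ℝ A t + u) 1 x₀ := by
    simpa [Algebra.algebraMap_eq_smul_one] using
      ((hasDerivAt_id x₀).smul_const (1 : A)).add_const u
  convert h.fun_pow' p using 1
  have hterm : ∀ i ∈ range p, (algebraMap ℝ A x₀ + u) ^ (p.pred - i) * 1 *
      (algebraMap ℝ A x₀ + u) ^ i = (algebraMap ℝ A x₀ + u) ^ (p - 1) := fun i hi => by
    rw [mul_one, ← pow_add, Nat.pred_eq_sub_one, Nat.sub_add_cancel]
    have := mem_range.mp hi
    omega
  rw [sum_congr rfl hterm, sum_const, card_range, Nat.cast_smul_eq_nsmul]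

theorem hasDerivAt_homogeneousSum (c : ℕ → ℝ) (k : ℕ) (u : A) (x₀ : ℝ) :
    HasDerivAt
      (fun t : ℝ => homogeneousSum c (k + 1) (algebraMap ℝ A t + u) (algebraMap ℝ A t - u))
      (homogeneousSum (fun s => ((k : ℝ) + 1 - s) * c s + ((s : ℝ) + 1) * c (s + 1)) k
        (algebraMap ℝ A x₀ + u) (algebraMap ℝ A x₀ - u)) x₀ := by
  rw [← sum_smul_pow_mul_pow_deriv_eq_homogeneousSum]
  refine HasDerivAt.fun_sum fun s _ => ?_
  have hsub := hasDerivAt_algebraMap_add_pow (-u) s x₀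
  simp only [← sub_eq_add_neg] at hsub
  have := ((hasDerivAt_algebraMap_add_pow u (k + 1 - s) x₀).fun_mul hsub).const_smul (c s)
  rwa [show k + 1 - s - 1 = k - s by omega] at this

end HomogeneousSum

theorem appell_property_general (n k : ℕ) (hn : 1 ≤ n) {A : Type*} [NormedRing A]
    [NormedAlgebra ℝ A] (u : A) (x0 : ℝ) :
    (deriv (fun t : ℝ => ∑ s ∈ Finset.range (k + 1),
        T n k s • ((algebraMap ℝ A t + u) ^ (k - s) * (algebraMap ℝ A t - u) ^ s)) x0
      = (k : ℝ) • ∑ s ∈ Finset.range ((k - 1) + 1),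
        T n (k - 1) s • ((algebraMap ℝ A x0 + u) ^ (k - 1 - s) * (algebraMap ℝ A x0 - u) ^ s))
    ∧ (∀ s : ℕ, s ≤ k - 1 →
        ((k : ℝ) - s) * T n k s + ((s : ℝ) + 1) * T n k (s + 1) = (k : ℝ) * T n (k - 1) s) := by
  cases k with
  | zero => simp [T]
  | succ m =>
    simp only [Nat.add_sub_cancel, Nat.cast_succ]
    refine ⟨?_, fun s hs => T_recurrence hn hs⟩
    refine (hasDerivAt_homogeneousSum (T n (m + 1)) m u x0).deriv.trans ?_
    rw [homogeneousSum, smul_sum]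
    exact sum_congr rfl fun s hs => by
      rw [T_recurrence hn (Nat.lt_succ_iff.mp (mem_range.mp hs)), mul_smul]

/-- Appell property (scalar consequence): for `n ≥ 1`, `k ≥ 1`, the derivative with
respect to the real coordinate `x_0` of the Clifford-Appell polynomial
`P_k^n(x) = ∑_{s=0}^k T_s^k(n) x^{k-s} x̄^s` (with `x = x_0 + x̲`, `x̄ = x_0 - x̲`,
the vector part `u = x̲` fixed) equals `k P_{k-1}^n(x)`; equivalently, the coefficients
satisfy `(k-s) T_s^k(n) + (s+1) T_{s+1}^k(n) = k T_s^{k-1}(n)` for `0 ≤ s ≤ k-1`. -/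
theorem appell_property (n k : ℕ) (hn : 1 ≤ n) (hk : 1 ≤ k) {A : Type*} [NormedRing A]
    [NormedAlgebra ℝ A] (u : A) (x0 : ℝ) :
    (deriv (fun t : ℝ => ∑ s ∈ Finset.range (k + 1),
        T n k s • ((algebraMap ℝ A t + u) ^ (k - s) * (algebraMap ℝ A t - u) ^ s)) x0
      = (k : ℝ) • ∑ s ∈ Finset.range ((k - 1) + 1),
        T n (k - 1) s • ((algebraMap ℝ A x0 + u) ^ (k - 1 - s) * (algebraMap ℝ A x0 - u) ^ s))
    ∧ (∀ s : ℕ, s ≤ k - 1 →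
        ((k : ℝ) - s) * T n k s + ((s : ℝ) + 1) * T n k (s + 1) = (k : ℝ) * T n (k - 1) s) :=
  appell_property_general n k hn u x0
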